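/- Let Φ : (A[[λ]], π) → (B[[λ]], σ) be a Poisson morphism deforming a Poisson morphism φ₀ : (A,π₀) → (B,σ₀) with φ₀ injective, and let A' be the Poisson commutant of φ₀(A) in (B, σ₀), with inclusion φ₀'. Let C = {b ∈ B[[λ]] : σ(b, Φ(a)) = 0 for all a ∈ A[[λ]]} be the Poisson commutant of Φ(A[[λ]]). If X' ∈ λ·Der(B)[[λ]] satisfies exp(X')φ₀'(A'[[λ]]) ⊆ C, then exp(X')∘φ₀' : A'[[λ]] → C is a ring isomorphism. -/

import Mathlib

/-- A Poisson bracket on a commutative ring: an antisymmetric biderivation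
satisfying the Jacobi identity. -/
structure IsPoissonBr {R : Type*} [CommRing R] (br : R → R → R) : Prop where
  add_left : ∀ x y z, br (x + y) z = br x z + br y z
  add_right : ∀ x y z, br x (y + z) = br x y + br x z
  antisymm : ∀ x y, br x y = - br y x
  leibniz : ∀ x y z, br x (y * z) = br x y * z + y * br x z
  jacobi : ∀ x y z, br x (br y z) = br (br x y) z + br y (br x z)

/-- `D` represents an element `X ∈ λ·Der(B)[[λ]]`, i.e. a formal derivation of `B[[λ]]`
(additive, `K`-linear, Leibniz, `λ`-linear) whose zeroth order term vanishes. -/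
def IsFormalDer (K : Type*) {B : Type*} [Field K] [CommRing B] [Algebra K B]
    (D : PowerSeries B → PowerSeries B) : Prop :=
  (∀ f g, D (f + g) = D f + D g) ∧
  (∀ (c : K) (f : PowerSeries B), D (c • f) = c • D f) ∧
  (∀ f g, D (f * g) = D f * g + f * D g) ∧
  (∀ f, D (PowerSeries.X * f) = PowerSeries.X * D f) ∧
  (∀ f, PowerSeries.coeff (R := B) 0 (D f) = 0)

/-- The exponential `exp(D) = id + D + D²/2! + ⋯`, well defined in each `λ`-order. -/
noncomputable def expF (K : Type*) {B : Type*} [Field K] [CommRing B] [Algebra K B]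
    (D : PowerSeries B → PowerSeries B) : PowerSeries B → PowerSeries B :=
  fun f => PowerSeries.mk fun n =>
    ∑ m ∈ Finset.range (n + 1), ((m.factorial : K)⁻¹) • PowerSeries.coeff (R := B) n (D^[m] f)
/-- The Poisson commutant of `φ₀(A)` in `(B,σ₀)`, as a subalgebra of `B`. -/
def commutant (K : Type*) {A B : Type*} [Field K] [CommRing A] [CommRing B] [Algebra K B]
    (σ₀ : B → B → B) (φ₀ : A →+* B) (hσ₀ : IsPoissonBr σ₀)
    (hsm : ∀ (c : K) (x y : B), σ₀ (c • x) y = c • σ₀ x y) : Subalgebra K B where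
  carrier := {b : B | ∀ a : A, σ₀ b (φ₀ a) = 0}
  one_mem' := by
    simp only [Set.mem_setOf_eq]
    intro a
    have h1 : σ₀ (φ₀ a) (1 : B) = 0 := by
      have h := hσ₀.leibniz (φ₀ a) 1 1
      rw [mul_one, mul_one, one_mul] at h
      exact (left_eq_add.mp h)
    rw [hσ₀.antisymm, h1, neg_zero]
  zero_mem' := by
    simp only [Set.mem_setOf_eq]
    intro a
    have h := hσ₀.add_left 0 0 (φ₀ a)
    rw [add_zero] at h
    exact (left_eq_add.mp h)
  add_mem' := by
    intro x y hx hy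
    simp only [Set.mem_setOf_eq] at hx hy ⊢
    intro a
    rw [hσ₀.add_left, hx a, hy a, add_zero]
  mul_mem' := by
    intro x y hx hy
    simp only [Set.mem_setOf_eq] at hx hy ⊢
    intro a
    have hx' : σ₀ (φ₀ a) x = 0 := by rw [hσ₀.antisymm, hx a, neg_zero]
    have hy' : σ₀ (φ₀ a) y = 0 := by rw [hσ₀.antisymm, hy a, neg_zero]
    rw [hσ₀.antisymm, hσ₀.leibniz, hx', hy']
    simp
  algebraMap_mem' := by
    intro c
    simp only [Set.mem_setOf_eq]
    intro a
    have h1 : σ₀ (φ₀ a) (1 : B) = 0 := by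
      have h := hσ₀.leibniz (φ₀ a) 1 1
      rw [mul_one, mul_one, one_mul] at h
      exact (left_eq_add.mp h)
    have h2 : σ₀ (1 : B) (φ₀ a) = 0 := by rw [hσ₀.antisymm, h1, neg_zero]
    rw [Algebra.algebraMap_eq_smul_one, hsm, h2, smul_zero]

/-- The deformed morphism `exp(X') ∘ φ₀' : A'[[λ]] → B[[λ]]` on the commutant. -/
noncomputable def thetaMap (K : Type*) {A B : Type*} [Field K] [CommRing A] [CommRing B]
    [Algebra K B] (σ₀ : B → B → B) (φ₀ : A →+* B) (hσ₀ : IsPoissonBr σ₀)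
    (hsm : ∀ (c : K) (x y : B), σ₀ (c • x) y = c • σ₀ x y)
    (X' : PowerSeries B → PowerSeries B) :
    PowerSeries ↥(commutant K σ₀ φ₀ hσ₀ hsm) → PowerSeries B :=
  fun g => expF K X'
    (PowerSeries.map ((commutant K σ₀ φ₀ hσ₀ hsm).val.toRingHom) g)

/-!
`exp(X')` is `λ`-linear and the identity modulo `λ`, so `λⁿ ∣ exp(X') f ↔ λⁿ ∣ f`; with the
injectivity of `φ₀'` this makes `θ = exp(X') ∘ φ₀'` an injective ring map preserving the `λ`-adic
order. For surjectivity onto `C`: the zeroth order of `h ∈ C` Poisson-commutes with `φ₀(A)` for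
`σ₀`, so it lies in `A'`, and `h - θ(h₀)` is `λ` times an element of `C`. Iterating gives
`gₙ` with `θ(gₙ) ≡ h mod λⁿ`, and the `gₙ` converge `λ`-adically because `θ` reflects the order.
-/

open Finset in
theorem Finset.sum_range_sum_antidiagonal_eq_sum_range_sum_range {M : Type*} [AddCommMonoid M]
    {n : ℕ} {T : ℕ → ℕ → M} (hT : ∀ i j, n < i + j → T i j = 0) :
    ∑ m ∈ range (n + 1), ∑ p ∈ antidiagonal m, T p.1 p.2
      = ∑ i ∈ range (n + 1), ∑ j ∈ range (n + 1), T i j := by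
  simp_rw [Nat.sum_antidiagonal_eq_sum_range_succ_mk]
  rw [sum_comm' (t' := range (n + 1)) (s' := fun i => Ico i (n + 1))
    (fun m i => by simp only [mem_range, mem_Ico]; omega)]
  refine sum_congr rfl fun i hi => ?_
  rw [sum_Ico_eq_sum_range]
  simp_rw [add_tsub_cancel_left]
  refine sum_subset (range_subset_range.mpr (by omega)) fun j hj hj' => hT i j ?_
  simp only [mem_range] at hj hj'
  omega

namespace PowerSeries

variable {R S : Type*} [Ring R] [Ring S]

theorem eq_zero_of_forall_X_pow_dvd {f : R⟦X⟧} (h : ∀ n, X ^ n ∣ f) : f = 0 :=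
  ext fun n => X_pow_dvd_iff.mp (h (n + 1)) n n.lt_succ_self

theorem exists_forall_X_pow_dvd_sub {g : ℕ → R⟦X⟧}
    (hg : ∀ n m, n ≤ m → X ^ n ∣ g m - g n) : ∃ L, ∀ n, X ^ n ∣ L - g n := by
  refine ⟨mk fun j => coeff j (g (j + 1)), fun n => X_pow_dvd_iff.mpr fun j hj => ?_⟩
  have hgj := X_pow_dvd_iff.mp (hg (j + 1) n hj) j j.lt_succ_self
  rw [map_sub, sub_eq_zero] at hgj ⊢
  rw [coeff_mk, hgj]

theorem X_pow_dvd_map_iff {ι : R →+* S} (hι : Function.Injective ι) {n : ℕ} {f : R⟦X⟧} :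
    X ^ n ∣ map ι f ↔ X ^ n ∣ f := by
  simp only [X_pow_dvd_iff, coeff_map, map_eq_zero_iff ι hι]

section Approximation

variable (θ : R⟦X⟧ →+ S⟦X⟧)

theorem injective_of_X_pow_dvd_iff (hθdvd : ∀ n u, X ^ n ∣ θ u ↔ X ^ n ∣ u) :
    Function.Injective θ :=
  (injective_iff_map_eq_zero θ).mpr fun u hu =>
    eq_zero_of_forall_X_pow_dvd fun n => (hθdvd n u).mp (hu ▸ dvd_zero _)

theorem range_eq_of_lift_mod_X (hθX : ∀ u, θ (X * u) = X * θ u)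
    (hθdvd : ∀ n u, X ^ n ∣ θ u ↔ X ^ n ∣ u) {H : AddSubgroup S⟦X⟧} (hH : ∀ h, X * h ∈ H → h ∈ H)
    (hθH : ∀ g, θ g ∈ H) (hlift : ∀ h ∈ H, ∃ b : R, X ∣ h - θ (C b)) :
    Set.range θ = H := by
  refine Set.Subset.antisymm (Set.range_subset_iff.mpr hθH) fun h hh => ?_
  have approx : ∀ n, ∀ h ∈ H, ∃ g, X ^ n ∣ h - θ g := by
    intro n
    induction n with
    | zero => exact fun h _ => ⟨0, by simp⟩
    | succ n ih =>
      intro h hh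
      obtain ⟨b, r, hr⟩ := hlift h hh
      obtain ⟨g, q, hq⟩ := ih r (hH r (hr ▸ H.sub_mem hh (hθH _)))
      refine ⟨C b + X * g, q, ?_⟩
      rw [map_add, hθX, pow_succ', mul_assoc, ← hq, mul_sub, ← hr]
      abel
  choose g hg using fun n => approx n h hh
  obtain ⟨L, hL⟩ := exists_forall_X_pow_dvd_sub (g := g) fun n m hnm => by
    rw [← hθdvd, map_sub, show θ (g m) - θ (g n) = (h - θ (g n)) - (h - θ (g m)) by abel]
    exact dvd_sub (hg n) ((pow_dvd_pow X hnm).trans (hg m))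
  refine ⟨L, sub_eq_zero.mp (eq_zero_of_forall_X_pow_dvd fun n => ?_)⟩
  rw [show θ L - h = θ (L - g n) - (h - θ (g n)) by rw [map_sub]; abel]
  exact dvd_sub ((hθdvd n _).mpr (hL n)) (hg n)

end Approximation

end PowerSeries

open Finset in
theorem Derivation.iterate_apply_mul {R A : Type*} [CommSemiring R] [CommSemiring A] [Algebra R A]
    (D : Derivation R A A) (n : ℕ) (a b : A) :
    D^[n] (a * b) = ∑ ij ∈ antidiagonal n, n.choose ij.1 • (D^[ij.1] a * D^[ij.2] b) := by
  induction n with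
  | zero => simp
  | succ n ih =>
    rw [sum_antidiagonal_choose_succ_nsmul (fun i j => D^[i] a * D^[j] b) n]
    simp only [Function.iterate_succ_apply', ih, map_sum, map_nsmul, Derivation.leibniz,
      smul_eq_mul, smul_add, sum_add_distrib]
    congr 1
    refine sum_congr rfl fun ij hij => ?_
    rw [n.choose_symm_of_eq_add (HasAntidiagonal.mem_antidiagonal.1 hij).symm, mul_comm]

theorem Nat.inv_factorial_mul_add_choose (K : Type*) [Field K] [CharZero K] (i j : ℕ) :
    ((i + j).factorial : K)⁻¹ * ((i + j).choose i : K)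
      = (i.factorial : K)⁻¹ * (j.factorial : K)⁻¹ := by
  have hi : (i.factorial : K) ≠ 0 := Nat.cast_ne_zero.mpr i.factorial_ne_zero
  have hj : (j.factorial : K) ≠ 0 := Nat.cast_ne_zero.mpr j.factorial_ne_zero
  have hij : ((i + j).factorial : K) ≠ 0 := Nat.cast_ne_zero.mpr (i + j).factorial_ne_zero
  rw [Nat.cast_add_choose]
  field_simp

section Exp

open PowerSeries Finset

variable {K B : Type*} [Field K] [CommRing B] [Algebra K B] {D : B⟦X⟧ → B⟦X⟧}

theorem coeff_expF (f : B⟦X⟧) (n : ℕ) :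
    coeff n (expF K D f) = ∑ m ∈ range (n + 1), (m.factorial : K)⁻¹ • coeff n (D^[m] f) :=
  coeff_mk _ _

theorem coeff_zero_expF (f : B⟦X⟧) : coeff 0 (expF K D f) = coeff 0 f := by
  simp [coeff_expF]

end Exp

namespace IsFormalDer

open PowerSeries Finset

variable {K B : Type*} [Field K] [CommRing B] [Algebra K B] {D : B⟦X⟧ → B⟦X⟧}

noncomputable def toDerivation (hD : IsFormalDer K D) : Derivation K B⟦X⟧ B⟦X⟧ :=
  Derivation.mk' ⟨⟨D, hD.1⟩, hD.2.1⟩ fun f g => by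
    simp only [LinearMap.coe_mk, AddHom.coe_mk, smul_eq_mul, hD.2.2.1]
    ring

theorem coe_toDerivation (hD : IsFormalDer K D) : ⇑hD.toDerivation = D := rfl

theorem map_X_pow_mul (hD : IsFormalDer K D) (n : ℕ) (f : B⟦X⟧) :
    D (X ^ n * f) = X ^ n * D f := by
  induction n generalizing f with
  | zero => simp
  | succ n ih => rw [pow_succ', mul_assoc, mul_assoc, hD.2.2.2.1, ih]

theorem X_dvd_apply (hD : IsFormalDer K D) (f : B⟦X⟧) : X ∣ D f :=
  X_dvd_iff.mpr (by rw [← coeff_zero_eq_constantCoeff_apply]; exact hD.2.2.2.2 f)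

theorem X_pow_dvd_iterate (hD : IsFormalDer K D) {n : ℕ} {f : B⟦X⟧} (h : X ^ n ∣ f) (m : ℕ) :
    X ^ (n + m) ∣ D^[m] f := by
  induction m with
  | zero => exact h
  | succ m ih =>
    obtain ⟨u, hu⟩ := ih
    rw [Function.iterate_succ_apply', hu, hD.map_X_pow_mul, ← add_assoc, pow_succ]
    exact mul_dvd_mul_left _ (hD.X_dvd_apply u)

theorem X_pow_dvd_iterate_self (hD : IsFormalDer K D) (m : ℕ) (f : B⟦X⟧) : X ^ m ∣ D^[m] f := by
  simpa using hD.X_pow_dvd_iterate (n := 0) (by simp) m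

theorem coeff_iterate_of_lt (hD : IsFormalDer K D) {n m : ℕ} (h : n < m) (f : B⟦X⟧) :
    coeff n (D^[m] f) = 0 :=
  X_pow_dvd_iff.mp (hD.X_pow_dvd_iterate_self m f) n h

theorem coeff_expF_of_le (hD : IsFormalDer K D) (f : B⟦X⟧) {n N : ℕ} (h : n ≤ N) :
    coeff n (expF K D f) = ∑ m ∈ range (N + 1), (m.factorial : K)⁻¹ • coeff n (D^[m] f) := by
  rw [coeff_expF]
  refine sum_subset (range_subset_range.mpr (by omega)) fun m _ hm => ?_
  rw [hD.coeff_iterate_of_lt (by simp at hm; omega), smul_zero]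

theorem expF_X_mul (hD : IsFormalDer K D) (f : B⟦X⟧) : expF K D (X * f) = X * expF K D f := by
  have hcomm : ∀ m, D^[m] (X * f) = X * D^[m] f := fun m =>
    Function.Commute.iterate_left (f := D) (g := (X * ·)) hD.2.2.2.1 m f
  ext (_ | n)
  · rw [coeff_zero_expF, coeff_zero_X_mul, coeff_zero_X_mul]
  · rw [coeff_succ_X_mul, coeff_expF, hD.coeff_expF_of_le f n.le_succ]
    simp only [hcomm, coeff_succ_X_mul]

theorem expF_add (hD : IsFormalDer K D) (f g : B⟦X⟧) :
    expF K D (f + g) = expF K D f + expF K D g := by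
  ext n
  rw [← hD.coe_toDerivation]
  simp only [coeff_expF, iterate_map_add, map_add, smul_add, sum_add_distrib]

theorem expF_one (hD : IsFormalDer K D) : expF K D 1 = 1 := by
  have hiter : ∀ m, D^[m + 1] 1 = 0 := fun m => by
    rw [Function.iterate_succ_apply, ← hD.coe_toDerivation, Derivation.map_one_eq_zero,
      iterate_map_zero]
  ext n
  rw [coeff_expF, sum_range_succ']
  simp only [hiter, map_zero, smul_zero, sum_const_zero, zero_add, Nat.factorial_zero,
    Nat.cast_one, inv_one, one_smul, Function.iterate_zero, id_eq]

theorem expF_mul [CharZero K] (hD : IsFormalDer K D) (f g : B⟦X⟧) :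
    expF K D (f * g) = expF K D f * expF K D g := by
  ext k
  -- both sides are the order-`k` coefficient of `∑ᵢⱼ Dⁱf · Dʲg / (i! j!)`
  let T : ℕ → ℕ → B := fun i j =>
    ((i.factorial : K)⁻¹ * (j.factorial : K)⁻¹) • coeff k (D^[i] f * D^[j] g)
  have hT : ∀ i j, k < i + j → T i j = 0 := fun i j hij => by
    have hdvd := mul_dvd_mul (hD.X_pow_dvd_iterate_self i f) (hD.X_pow_dvd_iterate_self j g)
    rw [← pow_add] at hdvd
    simp only [T, X_pow_dvd_iff.mp hdvd k hij, smul_zero]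
  have lhs : coeff k (expF K D (f * g)) = ∑ m ∈ range (k + 1), ∑ p ∈ antidiagonal m, T p.1 p.2 := by
    rw [coeff_expF]
    refine sum_congr rfl fun m _ => ?_
    rw [← hD.coe_toDerivation, Derivation.iterate_apply_mul, map_sum, smul_sum]
    refine sum_congr rfl fun p hp => ?_
    rw [HasAntidiagonal.mem_antidiagonal] at hp
    subst hp
    rw [map_nsmul, ← Nat.cast_smul_eq_nsmul K, smul_smul, Nat.inv_factorial_mul_add_choose]
    rfl
  have rhs : coeff k (expF K D f * expF K D g)
      = ∑ i ∈ range (k + 1), ∑ j ∈ range (k + 1), T i j := by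
    rw [coeff_mul]
    calc _ = ∑ p ∈ antidiagonal k, ∑ i ∈ range (k + 1), ∑ j ∈ range (k + 1),
          ((i.factorial : K)⁻¹ * (j.factorial : K)⁻¹) •
            (coeff p.1 (D^[i] f) * coeff p.2 (D^[j] g)) := by
          refine sum_congr rfl fun p hp => ?_
          rw [hD.coeff_expF_of_le f (HasAntidiagonal.antidiagonal.fst_le hp),
            hD.coeff_expF_of_le g (HasAntidiagonal.antidiagonal.snd_le hp), sum_mul_sum]
          simp_rw [smul_mul_smul_comm]
      _ = _ := by
          rw [sum_comm]
          refine sum_congr rfl fun i _ => ?_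
          rw [sum_comm]
          simp only [T, coeff_mul, smul_sum]
  rw [lhs, rhs, sum_range_sum_antidiagonal_eq_sum_range_sum_range hT]

noncomputable def expRingHom [CharZero K] (hD : IsFormalDer K D) : B⟦X⟧ →+* B⟦X⟧ where
  toFun := expF K D
  map_one' := hD.expF_one
  map_mul' := hD.expF_mul
  map_zero' := by simpa using hD.expF_add 0 0
  map_add' := hD.expF_add

theorem coe_expRingHom [CharZero K] (hD : IsFormalDer K D) : ⇑hD.expRingHom = expF K D := rfl

theorem X_pow_succ_dvd_expF_sub (hD : IsFormalDer K D) {n : ℕ} {f : B⟦X⟧} (h : X ^ n ∣ f) :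
    X ^ (n + 1) ∣ expF K D f - f := by
  refine X_pow_dvd_iff.mpr fun j hj => ?_
  rw [map_sub, coeff_expF, sum_range_succ', sub_eq_zero]
  refine (add_eq_right.mpr (sum_eq_zero fun m _ => ?_)).trans (by simp)
  rw [X_pow_dvd_iff.mp (hD.X_pow_dvd_iterate h (m + 1)) j (by omega), smul_zero]

theorem X_pow_dvd_expF_iff (hD : IsFormalDer K D) {n : ℕ} {f : B⟦X⟧} :
    X ^ n ∣ expF K D f ↔ X ^ n ∣ f := by
  induction n with
  | zero => simp
  | succ n ih =>
    have hle : (X : B⟦X⟧) ^ n ∣ X ^ (n + 1) := pow_dvd_pow X n.le_succ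
    constructor
    · intro h
      have hsub := hD.X_pow_succ_dvd_expF_sub (ih.mp (hle.trans h))
      simpa using dvd_sub h hsub
    · intro h
      have hsub := hD.X_pow_succ_dvd_expF_sub (hle.trans h)
      simpa using dvd_add h hsub

end IsFormalDer

namespace IsPoissonBr

variable {R : Type*} [CommRing R] {br : R → R → R}

def addMonoidHomLeft (hbr : IsPoissonBr br) (y : R) : R →+ R :=
  AddMonoidHom.mk' (br · y) fun x x' => hbr.add_left x x' y

def commutant (hbr : IsPoissonBr br) (S : Set R) : AddSubgroup R where
  carrier := {x | ∀ s ∈ S, br x s = 0}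
  zero_mem' := fun s _ => (hbr.addMonoidHomLeft s).map_zero
  add_mem' := fun hx hy s hs => by simp only [hbr.add_left, hx s hs, hy s hs, add_zero]
  neg_mem' := fun hx s hs => ((hbr.addMonoidHomLeft s).map_neg _).trans (neg_eq_zero.mpr (hx s hs))

theorem mem_commutant (hbr : IsPoissonBr br) {S : Set R} {x : R} :
    x ∈ hbr.commutant S ↔ ∀ s ∈ S, br x s = 0 := Iff.rfl

open PowerSeries

variable {B : Type*} [CommRing B] {σ : B⟦X⟧ → B⟦X⟧ → B⟦X⟧}

theorem mem_commutant_of_X_mul_mem (hσ : IsPoissonBr σ)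
    (hσX : ∀ f g, σ (X * f) g = X * σ f g) {S : Set B⟦X⟧} {h : B⟦X⟧}
    (hXh : X * h ∈ hσ.commutant S) : h ∈ hσ.commutant S :=
  fun s hs => X_mul_cancel (by rw [← hσX, hXh s hs, mul_zero])

theorem coeff_zero_apply {σ₀ : B → B → B} (hσ : IsPoissonBr σ)
    (hσX : ∀ f g, σ (X * f) g = X * σ f g)
    (hσ0 : ∀ a b, coeff 0 (σ (C a) (C b)) = σ₀ a b) (u v : B⟦X⟧) :
    coeff 0 (σ u v) = σ₀ (coeff 0 u) (coeff 0 v) := by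
  have hX : ∀ f g, coeff 0 (σ (X * f) g) = 0 := fun f g => by rw [hσX, coeff_zero_X_mul]
  have hX' : ∀ f g, coeff 0 (σ f (X * g)) = 0 := fun f g => by
    rw [hσ.antisymm, map_neg, hX, neg_zero]
  conv_lhs => rw [eq_X_mul_shift_add_const u, eq_X_mul_shift_add_const v]
  simp only [hσ.add_left, hσ.add_right, map_add, hX, hX', hσ0, zero_add,
    coeff_zero_eq_constantCoeff_apply]

end IsPoissonBr

open PowerSeries in
theorem coeff_zero_mem_commutant {K A B : Type*} [Field K] [CommRing A] [CommRing B]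
    [Algebra K B] {σ₀ : B → B → B} {φ₀ : A →+* B} (hσ₀ : IsPoissonBr σ₀)
    (hsm : ∀ (c : K) (x y : B), σ₀ (c • x) y = c • σ₀ x y)
    {σ : B⟦X⟧ → B⟦X⟧ → B⟦X⟧} (hσ : IsPoissonBr σ) (hσX : ∀ f g, σ (X * f) g = X * σ f g)
    (hσ0 : ∀ a b, coeff 0 (σ (C a) (C b)) = σ₀ a b)
    {Φ : A⟦X⟧ → B⟦X⟧} (hΦ0 : ∀ f, coeff 0 (Φ f) = φ₀ (coeff 0 f))
    {h : B⟦X⟧} (hh : h ∈ hσ.commutant (Set.range Φ)) :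
    coeff 0 h ∈ commutant K σ₀ φ₀ hσ₀ hsm := fun a => by
  simpa [hσ.coeff_zero_apply hσX hσ0, hΦ0] using congrArg (coeff 0) (hh _ ⟨C a, rfl⟩)

theorem stmt_11_general {K A B : Type*} [Field K] [CharZero K] [CommRing A] [CommRing B]
    [Algebra K B]
    (σ₀ : B → B → B)
    (hσ₀ : IsPoissonBr σ₀)
    (hsm : ∀ (c : K) (x y : B), σ₀ (c • x) y = c • σ₀ x y)
    (φ₀ : A →+* B)
    -- formal Poisson deformations of π₀ and σ₀
    (σ : PowerSeries B → PowerSeries B → PowerSeries B)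
    (hσ : IsPoissonBr σ)
    (hσX : ∀ f g, σ (PowerSeries.X * f) g = PowerSeries.X * σ f g)
    (hσ0 : ∀ a b : B, PowerSeries.coeff (R := B) 0 (σ (PowerSeries.C (R := B) a) (PowerSeries.C (R := B) b))
       = σ₀ a b)
    -- the deformed Poisson morphism Φ, deforming φ₀
    (Φ : PowerSeries A →+* PowerSeries B)
    (hΦ0 : ∀ f, PowerSeries.coeff (R := B) 0 (Φ f) = φ₀ (PowerSeries.coeff (R := A) 0 f))
    -- X' ∈ λ·Der(B)[[λ]] with exp(X') φ₀'(A'[[λ]]) ⊆ C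
    (X' : PowerSeries B → PowerSeries B) (hX' : IsFormalDer K X')
    (hinto : ∀ g : PowerSeries ↥(commutant K σ₀ φ₀ hσ₀ hsm),
      ∀ f : PowerSeries A, σ (thetaMap K σ₀ φ₀ hσ₀ hsm X' g) (Φ f) = 0) :
    Function.Injective (thetaMap K σ₀ φ₀ hσ₀ hsm X') ∧
    Set.range (thetaMap K σ₀ φ₀ hσ₀ hsm X') =
      {h : PowerSeries B | ∀ f : PowerSeries A, σ h (Φ f) = 0} ∧
    thetaMap K σ₀ φ₀ hσ₀ hsm X' 1 = 1 ∧
    (∀ g₁ g₂, thetaMap K σ₀ φ₀ hσ₀ hsm X' (g₁ + g₂) =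
      thetaMap K σ₀ φ₀ hσ₀ hsm X' g₁ + thetaMap K σ₀ φ₀ hσ₀ hsm X' g₂) ∧
    (∀ g₁ g₂, thetaMap K σ₀ φ₀ hσ₀ hsm X' (g₁ * g₂) =
      thetaMap K σ₀ φ₀ hσ₀ hsm X' g₁ * thetaMap K σ₀ φ₀ hσ₀ hsm X' g₂) := by
  let θ := hX'.expRingHom.comp (PowerSeries.map (commutant K σ₀ φ₀ hσ₀ hsm).val.toRingHom)
  have hθ : thetaMap K σ₀ φ₀ hσ₀ hsm X' = θ := rfl
  have hθdvd : ∀ n u, PowerSeries.X ^ n ∣ θ u ↔ PowerSeries.X ^ n ∣ u := fun _ _ =>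
    hX'.X_pow_dvd_expF_iff.trans (PowerSeries.X_pow_dvd_map_iff Subtype.val_injective)
  have hθX : ∀ u, θ (PowerSeries.X * u) = PowerSeries.X * θ u := fun u => by
    rw [RingHom.comp_apply, RingHom.comp_apply, map_mul (PowerSeries.map _), PowerSeries.map_X,
      hX'.coe_expRingHom, hX'.expF_X_mul]
  have hlift : ∀ h ∈ hσ.commutant (Set.range Φ),
      ∃ b, PowerSeries.X ∣ h - θ (PowerSeries.C b) := fun h hh =>
    ⟨⟨_, coeff_zero_mem_commutant hσ₀ hsm hσ hσX hσ0 hΦ0 hh⟩, by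
      rw [PowerSeries.X_dvd_iff, ← PowerSeries.coeff_zero_eq_constantCoeff_apply, map_sub,
        RingHom.comp_apply, PowerSeries.map_C, hX'.coe_expRingHom, coeff_zero_expF,
        PowerSeries.coeff_zero_C]
      exact sub_self _⟩
  have hrange := PowerSeries.range_eq_of_lift_mod_X θ.toAddMonoidHom hθX hθdvd
    (fun _ => hσ.mem_commutant_of_X_mul_mem hσX)
    (fun g => hσ.mem_commutant.mpr (Set.forall_mem_range.mpr (hinto g))) hlift
  rw [hθ]
  exact ⟨PowerSeries.injective_of_X_pow_dvd_iff θ.toAddMonoidHom hθdvd,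
    hrange.trans (Set.ext fun _ => Set.forall_mem_range), map_one θ, map_add θ, map_mul θ⟩

theorem stmt_11 {K A B : Type*} [Field K] [CharZero K] [CommRing A] [CommRing B]
    [Algebra K B]
    (π₀ : A → A → A) (σ₀ : B → B → B)
    (hπ₀ : IsPoissonBr π₀) (hσ₀ : IsPoissonBr σ₀)
    (hsm : ∀ (c : K) (x y : B), σ₀ (c • x) y = c • σ₀ x y)
    (φ₀ : A →+* B) (hφinj : Function.Injective φ₀)
    (hφ₀ : ∀ x y, φ₀ (π₀ x y) = σ₀ (φ₀ x) (φ₀ y))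
    -- formal Poisson deformations of π₀ and σ₀
    (π : PowerSeries A → PowerSeries A → PowerSeries A)
    (σ : PowerSeries B → PowerSeries B → PowerSeries B)
    (hπ : IsPoissonBr π) (hσ : IsPoissonBr σ)
    (hπX : ∀ f g, π (PowerSeries.X * f) g = PowerSeries.X * π f g)
    (hσX : ∀ f g, σ (PowerSeries.X * f) g = PowerSeries.X * σ f g)
    (hπ0 : ∀ a b : A, PowerSeries.coeff (R := A) 0 (π (PowerSeries.C (R := A) a) (PowerSeries.C (R := A) b))
       = π₀ a b)
    (hσ0 : ∀ a b : B, PowerSeries.coeff (R := B) 0 (σ (PowerSeries.C (R := B) a) (PowerSeries.C (R := B) b))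
       = σ₀ a b)
    -- the deformed Poisson morphism Φ, deforming φ₀
    (Φ : PowerSeries A →+* PowerSeries B)
    (hΦ0 : ∀ f, PowerSeries.coeff (R := B) 0 (Φ f) = φ₀ (PowerSeries.coeff (R := A) 0 f))
    (hΦX : ∀ f, Φ (PowerSeries.X * f) = PowerSeries.X * Φ f)
    (hΦP : ∀ f g, Φ (π f g) = σ (Φ f) (Φ g))
    -- X' ∈ λ·Der(B)[[λ]] with exp(X') φ₀'(A'[[λ]]) ⊆ C
    (X' : PowerSeries B → PowerSeries B) (hX' : IsFormalDer K X')
    (hinto : ∀ g : PowerSeries ↥(commutant K σ₀ φ₀ hσ₀ hsm),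
      ∀ f : PowerSeries A, σ (thetaMap K σ₀ φ₀ hσ₀ hsm X' g) (Φ f) = 0) :
    Function.Injective (thetaMap K σ₀ φ₀ hσ₀ hsm X') ∧
    Set.range (thetaMap K σ₀ φ₀ hσ₀ hsm X') =
      {h : PowerSeries B | ∀ f : PowerSeries A, σ h (Φ f) = 0} ∧
    thetaMap K σ₀ φ₀ hσ₀ hsm X' 1 = 1 ∧
    (∀ g₁ g₂, thetaMap K σ₀ φ₀ hσ₀ hsm X' (g₁ + g₂) =
      thetaMap K σ₀ φ₀ hσ₀ hsm X' g₁ + thetaMap K σ₀ φ₀ hσ₀ hsm X' g₂) ∧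
    (∀ g₁ g₂, thetaMap K σ₀ φ₀ hσ₀ hsm X' (g₁ * g₂) =
      thetaMap K σ₀ φ₀ hσ₀ hsm X' g₁ * thetaMap K σ₀ φ₀ hσ₀ hsm X' g₂) :=
  stmt_11_general σ₀ hσ₀ hsm φ₀ σ hσ hσX hσ0 Φ hΦ0 X' hX' hinto
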